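/- arXiv:2101.12708 — 8 statements merged into one kernel-verified Lean document; each statement's English description precedes it below -/
import Mathlib

section
/- (Lemma 1: projection of the P-split representation) For every x ∈ ℝⁿ the following are equivalent: (i) x ∈ X and there exist real numbers α^l_s (for l ∈ D, s ∈ {1,…,P}) such that Σ_{i∈I_s} h_{i,l}(x_i) ≤ α^l_s for all l ∈ D and all s ∈ {1,…,P}, and there exists l ∈ D with Σ_{s=1}^P α^l_s ≤ b_l and αlo^l_s ≤ α^l_s ≤ αhi^l_s for all s ∈ {1,…,P}; (ii) x ∈ F. In other words, the feasible set of the P-split representation projected onto the x-space equals the feasible set of the original disjunction. -/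
/-!
The block sums `∑ i ∈ I s, h i l (x i)` of a partition add up to the full sum, so choosing `α` to be
these block sums turns the split constraint `∑ s, α l s ≤ b l` into the original one; such `α`
automatically lie between the block extrema over `X` because `x ∈ X`. Conversely any admissible
`α` dominates the block sums, hence the full sum.
-/

open Finset

theorem Finset.sum_sum_eq_sum_of_existsUnique_mem {ι κ M : Type*} [Fintype ι] [Fintype κ]
    [AddCommMonoid M] (I : κ → Finset ι) (hI : ∀ i, ∃! s, i ∈ I s) (f : ι → M) :
    ∑ s, ∑ i ∈ I s, f i = ∑ i, f i := by
  classical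
  have hdisj : Set.PairwiseDisjoint (↑(univ : Finset κ)) I := fun s _ t _ hst =>
    disjoint_left.mpr fun i his hit => hst ((hI i).unique his hit)
  have hcover : univ.biUnion I = univ := eq_univ_iff_forall.mpr fun i =>
    let ⟨s, hs, _⟩ := hI i
    mem_biUnion.mpr ⟨s, mem_univ s, hs⟩
  rw [← sum_biUnion hdisj, hcover]

theorem psplit_representation_projection_general
    {n : ℕ}
    {D : Type}
    (b : D → ℝ) (h : Fin n → D → ℝ → ℝ)
    (X : Set (Fin n → ℝ))
    {P : ℕ} (I : Fin P → Finset (Fin n))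
    (hpart : ∀ i : Fin n, ∃! s, i ∈ I s)
    (αlo αhi : D → Fin P → ℝ)
    (hlo : ∀ l s, IsLeast ((fun x => ∑ i ∈ I s, h i l (x i)) '' X) (αlo l s))
    (hhi : ∀ l s, IsGreatest ((fun x => ∑ i ∈ I s, h i l (x i)) '' X) (αhi l s))
    (x : Fin n → ℝ) :
    (x ∈ X ∧ ∃ α : D → Fin P → ℝ,
        (∀ l s, ∑ i ∈ I s, h i l (x i) ≤ α l s) ∧
        ∃ l : D, (∑ s, α l s ≤ b l) ∧
          ∀ s, αlo l s ≤ α l s ∧ α l s ≤ αhi l s)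
      ↔ (x ∈ X ∧ ∃ l : D, ∑ i, h i l (x i) ≤ b l) := by
  have hblocks (l : D) : ∑ s, ∑ i ∈ I s, h i l (x i) = ∑ i, h i l (x i) :=
    sum_sum_eq_sum_of_existsUnique_mem I hpart _
  constructor
  · rintro ⟨hx, α, hα, l, hsum, -⟩
    refine ⟨hx, l, ?_⟩
    calc ∑ i, h i l (x i) = ∑ s, ∑ i ∈ I s, h i l (x i) := (hblocks l).symm
      _ ≤ ∑ s, α l s := sum_le_sum fun s _ => hα l s
      _ ≤ b l := hsum
  · rintro ⟨hx, l, hl⟩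
    have hxblock (s : Fin P) : ∑ i ∈ I s, h i l (x i) ∈ (fun y => ∑ i ∈ I s, h i l (y i)) '' X :=
      Set.mem_image_of_mem _ hx
    refine ⟨hx, fun l s => ∑ i ∈ I s, h i l (x i), fun _ _ => le_rfl, l, (hblocks l).trans_le hl,
      fun s => ⟨(hlo l s).2 (hxblock s), (hhi l s).2 (hxblock s)⟩⟩

/-- **Lemma 1 (projection of the P-split representation).**
The feasible set of the P-split representation projected onto the x-space equals
the feasible set of the original disjunction. -/
theorem psplit_representation_projection
    {n : ℕ} (hn : 1 ≤ n)
    {D : Type} [Fintype D] [Nonempty D]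
    (b : D → ℝ) (h : Fin n → D → ℝ → ℝ)
    (hconv : ∀ i l, ConvexOn ℝ Set.univ (h i l))
    (X : Set (Fin n → ℝ)) (hXne : X.Nonempty) (hXconv : Convex ℝ X)
    (hXcomp : IsCompact X)
    (hdisjne : ∀ l : D, ∃ x ∈ X, ∑ i, h i l (x i) ≤ b l)
    {P : ℕ} (I : Fin P → Finset (Fin n))
    (hIne : ∀ s, (I s).Nonempty)
    (hpart : ∀ i : Fin n, ∃! s, i ∈ I s)
    (αlo αhi : D → Fin P → ℝ)
    (hlo : ∀ l s, IsLeast ((fun x => ∑ i ∈ I s, h i l (x i)) '' X) (αlo l s))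
    (hhi : ∀ l s, IsGreatest ((fun x => ∑ i ∈ I s, h i l (x i)) '' X) (αhi l s))
    (x : Fin n → ℝ) :
    (x ∈ X ∧ ∃ α : D → Fin P → ℝ,
        (∀ l s, ∑ i ∈ I s, h i l (x i) ≤ α l s) ∧
        ∃ l : D, (∑ s, α l s ≤ b l) ∧
          ∀ s, αlo l s ≤ α l s ∧ α l s ≤ αhi l s)
      ↔ (x ∈ X ∧ ∃ l : D, ∑ i, h i l (x i) ≤ b l) :=
  psplit_representation_projection_general b h X I hpart αlo αhi hlo hhi x
end

section
/- (Proposition 1: correctness of the P-split formulation) For every x ∈ ℝⁿ the following are equivalent: (i) there exist α = (α^l_s), ν = (ν^l_{s,d}) and λ ∈ {0,1}^D such that (x, α, ν, λ) satisfies the P-split formulation; (ii) x ∈ F. That is, the set of feasible x-variables of the P-split formulation equals the feasible set of the original disjunction. -/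
/-! With binary `λ` summing to one, `λ` is the indicator of a single disjunct `l₀`. The bounds
`αlo λ_d ≤ ν_{·,d} ≤ αhi λ_d` then force `ν_{·,d} = 0` for `d ≠ l₀`, so `α^{l₀}_s = ν^{l₀}_{s,l₀}`,
and summing `Σ_{i∈I_s} h_{i,l₀}(x_i) ≤ α^{l₀}_s` over the parts of the partition gives disjunct
`l₀`. Conversely, if `x ∈ X` satisfies disjunct `l₀`, take `λ` its indicator, `α^l_s` the partial
sums at `x` and `ν^l_{s,d} = α^l_s λ_d`; the bounds hold because `α^l_s` lies between the minimum
and the maximum of the partial sum over `X`. -/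

/-- The constraint system of the P-split formulation (extended convex-hull
formulation of the P-split representation). -/
def PSplitSystem {n : ℕ} {D : Type} [Fintype D] {P : ℕ}
    (X : Set (Fin n → ℝ)) (b : D → ℝ) (h : Fin n → D → ℝ → ℝ)
    (I : Fin P → Finset (Fin n)) (αlo αhi : D → Fin P → ℝ)
    (x : Fin n → ℝ) (α : D → Fin P → ℝ) (ν : D → Fin P → D → ℝ)
    (lam : D → ℝ) : Prop :=
  x ∈ X ∧
  (∀ l s, α l s = ∑ d, ν l s d) ∧
  (∀ l, ∑ s, ν l s l ≤ b l * lam l) ∧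
  (∀ l s d, αlo l s * lam d ≤ ν l s d ∧ ν l s d ≤ αhi l s * lam d) ∧
  (∀ l s, ∑ i ∈ I s, h i l (x i) ≤ α l s) ∧
  (∑ l, lam l = 1)

open Finset

theorem exists_eq_piSingle_of_sum_eq_one {D R : Type*} [Fintype D] [DecidableEq D]
    [Semiring R] [PartialOrder R] [IsOrderedCancelAddMonoid R] [ZeroLEOneClass R] [NeZero (1 : R)]
    {lam : D → R} (hbin : ∀ l, lam l = 0 ∨ lam l = 1) (hsum : ∑ l, lam l = 1) :
    ∃ l₀, lam = Pi.single l₀ 1 := by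
  obtain ⟨l₀, hl₀⟩ : ∃ l, lam l = 1 := by
    by_contra! hne
    simp [fun l => (hbin l).resolve_right (hne l)] at hsum
  refine ⟨l₀, funext fun d => ?_⟩
  rcases eq_or_ne d l₀ with rfl | hd
  · simpa using hl₀
  have hrest : ∑ l ∈ univ.erase l₀, lam l = 0 := by
    simpa [hl₀, hsum] using add_sum_erase univ lam (mem_univ l₀)
  have hnonneg : ∀ l, 0 ≤ lam l := fun l => by rcases hbin l with hl | hl <;> simp [hl]
  rw [Pi.single_eq_of_ne hd]
  exact (sum_eq_zero_iff_of_nonneg fun l _ => hnonneg l).mp hrest d (by simpa using hd)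

section PSplit

variable {n : ℕ} {D : Type} [Fintype D] [DecidableEq D] {P : ℕ}
  {X : Set (Fin n → ℝ)} {b : D → ℝ} {h : Fin n → D → ℝ → ℝ}
  {I : Fin P → Finset (Fin n)} {αlo αhi : D → Fin P → ℝ} {x : Fin n → ℝ}

theorem PSplitSystem.sum_le_of_piSingle (hpart : ∀ i, ∃! s, i ∈ I s)
    {α : D → Fin P → ℝ} {ν : D → Fin P → D → ℝ} {l₀ : D}
    (hsys : PSplitSystem X b h I αlo αhi x α ν (Pi.single l₀ 1)) :
    ∑ i, h i l₀ (x i) ≤ b l₀ := by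
  obtain ⟨-, hα, hb, hν, hαh, -⟩ := hsys
  have hν_off : ∀ s d, d ≠ l₀ → ν l₀ s d = 0 := fun s d hd => by
    have := hν l₀ s d
    simp only [Pi.single_eq_of_ne hd, mul_zero] at this
    exact le_antisymm this.2 this.1
  have hα_eq : ∀ s, α l₀ s = ν l₀ s l₀ := fun s => by
    rw [hα, sum_eq_single l₀ (fun d _ hd => hν_off s d hd) (by simp)]
  calc ∑ i, h i l₀ (x i) = ∑ s, ∑ i ∈ I s, h i l₀ (x i) :=
        (sum_sum_eq_sum_of_existsUnique_mem I hpart _).symm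
    _ ≤ ∑ s, α l₀ s := sum_le_sum fun s _ => hαh l₀ s
    _ = ∑ s, ν l₀ s l₀ := sum_congr rfl fun s _ => hα_eq s
    _ ≤ b l₀ := by simpa using hb l₀

theorem psplitSystem_piSingle (hpart : ∀ i, ∃! s, i ∈ I s)
    (hlo : ∀ l s, αlo l s ∈ lowerBounds ((fun x => ∑ i ∈ I s, h i l (x i)) '' X))
    (hhi : ∀ l s, αhi l s ∈ upperBounds ((fun x => ∑ i ∈ I s, h i l (x i)) '' X))
    (hxX : x ∈ X) {l₀ : D} (hl₀ : ∑ i, h i l₀ (x i) ≤ b l₀) :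
    PSplitSystem X b h I αlo αhi x (fun l s => ∑ i ∈ I s, h i l (x i))
      (fun l s d => (∑ i ∈ I s, h i l (x i)) * (Pi.single l₀ 1 : D → ℝ) d)
      (Pi.single l₀ 1) := by
  have hsingle_nonneg : ∀ d, 0 ≤ (Pi.single l₀ 1 : D → ℝ) d := fun d => by
    rw [Pi.single_apply]; split_ifs <;> norm_num
  refine ⟨hxX, fun l s => by simp [Pi.single_apply], fun l => ?_, fun l s d => ⟨?_, ?_⟩,
    fun l s => le_rfl, by simp⟩
  · rcases eq_or_ne l l₀ with rfl | hl
    · simpa [← sum_mul, sum_sum_eq_sum_of_existsUnique_mem I hpart] using hl₀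
    · simp [Pi.single_eq_of_ne hl]
  · exact mul_le_mul_of_nonneg_right (hlo l s ⟨x, hxX, rfl⟩) (hsingle_nonneg d)
  · exact mul_le_mul_of_nonneg_right (hhi l s ⟨x, hxX, rfl⟩) (hsingle_nonneg d)

end PSplit

theorem psplit_formulation_correct_general
    {n : ℕ}
    {D : Type} [Fintype D]
    (b : D → ℝ) (h : Fin n → D → ℝ → ℝ)
    (X : Set (Fin n → ℝ))
    {P : ℕ} (I : Fin P → Finset (Fin n))
    (hpart : ∀ i : Fin n, ∃! s, i ∈ I s)
    (αlo αhi : D → Fin P → ℝ)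
    (hlo : ∀ l s, IsLeast ((fun x => ∑ i ∈ I s, h i l (x i)) '' X) (αlo l s))
    (hhi : ∀ l s, IsGreatest ((fun x => ∑ i ∈ I s, h i l (x i)) '' X) (αhi l s))
    (x : Fin n → ℝ) :
    (∃ (α : D → Fin P → ℝ) (ν : D → Fin P → D → ℝ) (lam : D → ℝ),
        (∀ l, lam l = 0 ∨ lam l = 1) ∧
        PSplitSystem X b h I αlo αhi x α ν lam)
      ↔ (x ∈ X ∧ ∃ l : D, ∑ i, h i l (x i) ≤ b l) := by
  classical
  constructor
  · rintro ⟨α, ν, lam, hbin, hsys⟩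
    obtain ⟨l₀, rfl⟩ := exists_eq_piSingle_of_sum_eq_one hbin hsys.2.2.2.2.2
    exact ⟨hsys.1, l₀, hsys.sum_le_of_piSingle hpart⟩
  · rintro ⟨hxX, l₀, hl₀⟩
    refine ⟨_, _, _, fun l => ?_,
      psplitSystem_piSingle hpart (fun l s => (hlo l s).2) (fun l s => (hhi l s).2) hxX hl₀⟩
    rw [Pi.single_apply]
    split_ifs <;> simp

/-- **Proposition 1 (correctness of the P-split formulation).**
The set of feasible x-variables of the P-split formulation (with binary λ)
equals the feasible set of the original disjunction. -/
theorem psplit_formulation_correct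
    {n : ℕ} (hn : 1 ≤ n)
    {D : Type} [Fintype D] [Nonempty D]
    (b : D → ℝ) (h : Fin n → D → ℝ → ℝ)
    (hconv : ∀ i l, ConvexOn ℝ Set.univ (h i l))
    (X : Set (Fin n → ℝ)) (hXne : X.Nonempty) (hXconv : Convex ℝ X)
    (hXcomp : IsCompact X)
    (hdisjne : ∀ l : D, ∃ x ∈ X, ∑ i, h i l (x i) ≤ b l)
    {P : ℕ} (I : Fin P → Finset (Fin n))
    (hIne : ∀ s, (I s).Nonempty)
    (hpart : ∀ i : Fin n, ∃! s, i ∈ I s)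
    (αlo αhi : D → Fin P → ℝ)
    (hlo : ∀ l s, IsLeast ((fun x => ∑ i ∈ I s, h i l (x i)) '' X) (αlo l s))
    (hhi : ∀ l s, IsGreatest ((fun x => ∑ i ∈ I s, h i l (x i)) '' X) (αhi l s))
    (x : Fin n → ℝ) :
    (∃ (α : D → Fin P → ℝ) (ν : D → Fin P → D → ℝ) (lam : D → ℝ),
        (∀ l, lam l = 0 ∨ lam l = 1) ∧
        PSplitSystem X b h I αlo αhi x α ν lam)
      ↔ (x ∈ X ∧ ∃ l : D, ∑ i, h i l (x i) ≤ b l) :=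
  psplit_formulation_correct_general b h X I hpart αlo αhi hlo hhi x
end

section
/- (Supporting claim, forward direction of Proposition 1) Suppose (x, α, ν, λ) satisfies the P-split formulation with binary λ, and λ_d = 1 for some d ∈ D. Then ν^l_{s,d'} = 0 for every l ∈ D, every s ∈ {1,…,P} and every d' ∈ D with d' ≠ d, so that α^d_s = ν^d_{s,d} for all s; consequently Σ_{s=1}^P α^d_s ≤ b_d and x satisfies disjunct d, i.e., Σ_{i=1}^n h_{i,d}(x_i) ≤ b_d. -/
/-!
With λ binary and Σ λ = 1, every λ_{d'} with d' ≠ d vanishes, so the bounds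
αlo·λ_{d'} ≤ ν_{·,·,d'} ≤ αhi·λ_{d'} pinch ν_{·,·,d'} to zero. Hence α^d_s = ν^d_{s,d}, and the
aggregated constraint Σ_s ν^d_{s,d} ≤ b_d λ_d gives Σ_s α^d_s ≤ b_d. Since the blocks I_s
partition the coordinates, Σ_i h_{i,d}(x_i) = Σ_s Σ_{i ∈ I_s} h_{i,d}(x_i) ≤ Σ_s α^d_s.
-/

open Finset

theorem eq_zero_of_sum_eq_apply_of_nonneg {ι M : Type*} [Fintype ι] [AddCommMonoid M]
    [PartialOrder M] [IsOrderedCancelAddMonoid M] {f : ι → M} (hf : ∀ i, 0 ≤ f i) {j : ι}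
    (hsum : ∑ i, f i = f j) {i : ι} (hi : i ≠ j) : f i = 0 := by
  classical
  rw [← add_sum_erase _ _ (mem_univ j), add_eq_left,
    sum_eq_zero_iff_of_nonneg fun k _ => hf k] at hsum
  exact hsum i (mem_erase.2 ⟨hi, mem_univ i⟩)

theorem sum_eq_sum_sum_of_existsUnique_mem {ι κ M : Type*} [Fintype ι] [Fintype κ]
    [AddCommMonoid M] {I : κ → Finset ι} (hpart : ∀ i, ∃! s, i ∈ I s) (f : ι → M) :
    ∑ i, f i = ∑ s, ∑ i ∈ I s, f i := by
  classical
  choose g hg huniq using hpart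
  have hI : ∀ s, I s = univ.filter (g · = s) := fun s => by
    ext i
    simp only [mem_filter, mem_univ, true_and]
    exact ⟨fun h => (huniq i s h).symm, fun h => h ▸ hg i⟩
  simp only [hI]
  exact (sum_fiberwise univ g f).symm

theorem psplit_binary_forward_general
    {n : ℕ}
    {D : Type} [Fintype D]
    (b : D → ℝ) (h : Fin n → D → ℝ → ℝ)
    (X : Set (Fin n → ℝ))
    {P : ℕ} (I : Fin P → Finset (Fin n))
    (hpart : ∀ i : Fin n, ∃! s, i ∈ I s)
    (αlo αhi : D → Fin P → ℝ)
    (x : Fin n → ℝ) (α : D → Fin P → ℝ) (ν : D → Fin P → D → ℝ)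
    (lam : D → ℝ)
    (hsys : PSplitSystem X b h I αlo αhi x α ν lam)
    (hbin : ∀ l, lam l = 0 ∨ lam l = 1)
    (d : D) (hd : lam d = 1) :
    (∀ (l : D) (s : Fin P) (d' : D), d' ≠ d → ν l s d' = 0) ∧
    (∀ s : Fin P, α d s = ν d s d) ∧
    (∑ s, α d s ≤ b d) ∧
    (∑ i, h i d (x i) ≤ b d) := by
  obtain ⟨-, hα, hν, hbd, hineq, hsum⟩ := hsys
  have hlam : ∀ d', d' ≠ d → lam d' = 0 := fun d' =>
    eq_zero_of_sum_eq_apply_of_nonneg (fun l => by rcases hbin l with h0 | h1 <;> simp [*])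
      (hsum.trans hd.symm)
  have hν0 : ∀ l s d', d' ≠ d → ν l s d' = 0 := fun l s d' hne => by
    have hbounds := hbd l s d'
    rw [hlam d' hne, mul_zero, mul_zero] at hbounds
    exact le_antisymm hbounds.2 hbounds.1
  have hαν : ∀ s, α d s = ν d s d := fun s =>
    (hα d s).trans (sum_eq_single d (fun d' _ hne => hν0 d s d' hne) (by simp))
  have hαb : ∑ s, α d s ≤ b d := by
    simpa only [hαν, hd, mul_one] using hν d
  refine ⟨hν0, hαν, hαb, ?_⟩
  calc ∑ i, h i d (x i) = ∑ s, ∑ i ∈ I s, h i d (x i) :=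
        sum_eq_sum_sum_of_existsUnique_mem hpart _
    _ ≤ ∑ s, α d s := sum_le_sum fun s _ => hineq d s
    _ ≤ b d := hαb

/-- **Forward direction of Proposition 1.** If (x, α, ν, λ) satisfies the
P-split formulation with binary λ and λ_d = 1, then all disaggregated
variables ν^l_{s,d'} with d' ≠ d vanish, α^d_s = ν^d_{s,d}, Σ_s α^d_s ≤ b_d,
and x satisfies disjunct d. -/
theorem psplit_binary_forward
    {n : ℕ} (hn : 1 ≤ n)
    {D : Type} [Fintype D] [Nonempty D] [DecidableEq D]
    (b : D → ℝ) (h : Fin n → D → ℝ → ℝ)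
    (hconv : ∀ i l, ConvexOn ℝ Set.univ (h i l))
    (X : Set (Fin n → ℝ)) (hXne : X.Nonempty) (hXconv : Convex ℝ X)
    (hXcomp : IsCompact X)
    {P : ℕ} (I : Fin P → Finset (Fin n))
    (hIne : ∀ s, (I s).Nonempty)
    (hpart : ∀ i : Fin n, ∃! s, i ∈ I s)
    (αlo αhi : D → Fin P → ℝ)
    (hlo : ∀ l s, IsLeast ((fun x => ∑ i ∈ I s, h i l (x i)) '' X) (αlo l s))
    (hhi : ∀ l s, IsGreatest ((fun x => ∑ i ∈ I s, h i l (x i)) '' X) (αhi l s))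
    (x : Fin n → ℝ) (α : D → Fin P → ℝ) (ν : D → Fin P → D → ℝ)
    (lam : D → ℝ)
    (hsys : PSplitSystem X b h I αlo αhi x α ν lam)
    (hbin : ∀ l, lam l = 0 ∨ lam l = 1)
    (d : D) (hd : lam d = 1) :
    (∀ (l : D) (s : Fin P) (d' : D), d' ≠ d → ν l s d' = 0) ∧
    (∀ s : Fin P, α d s = ν d s d) ∧
    (∑ s, α d s ≤ b d) ∧
    (∑ i, h i d (x i) ≤ b d) :=
  psplit_binary_forward_general b h X I hpart αlo αhi x α ν lam hsys hbin d hd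
end

section
/- (Theorem 1: the 1-split formulation is equivalent to the big-M formulation) Consider the 1-split formulation, i.e., P = 1 with the single block I_1 = {1,…,n}, and write αlo^l = min_{x∈X} Σ_{i=1}^n h_{i,l}(x_i), αhi^l = max_{x∈X} Σ_{i=1}^n h_{i,l}(x_i). Assume αlo^l ≤ b_l ≤ αhi^l for every l ∈ D. Then for every x ∈ ℝⁿ and every λ ∈ [0,1]^D with Σ_{l∈D} λ_l = 1, the following are equivalent: (i) there exist α ∈ ℝ^D and ν = (ν^l_d)_{l,d∈D} such that x ∈ X, α^l = Σ_{d∈D} ν^l_d, ν^l_l ≤ b_l·λ_l, αlo^l·λ_d ≤ ν^l_d ≤ αhi^l·λ_d for all l, d ∈ D, and Σ_{i=1}^n h_{i,l}(x_i) ≤ α^l for all l ∈ D; (ii) x ∈ X and Σ_{i=1}^n h_{i,l}(x_i) ≤ b_l + M^l·(1 − λ_l) for every l ∈ D, where M^l = αhi^l − b_l. Hence the continuous relaxation of the 1-split formulation has the same projection onto (x, λ) as the big-M formulation with coefficients M^l = αhi^l − b_l. -/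
/-!
The constraints of the 1-split formulation decouple over the disjuncts `l`, and `α^l` only
enters through `Σ_d ν^l_d`. Under the upper bounds `ν^l_l ≤ b_l λ_l` and `ν^l_d ≤ αhi^l λ_d`,
this sum is at most `b_l λ_l + αhi^l (1 - λ_l) = b_l + M^l (1 - λ_l)`, and the bound is attained
by `ν^l_l = b_l λ_l`, `ν^l_d = αhi^l λ_d` for `d ≠ l`, which also meets the lower bounds because
`αlo^l ≤ b_l ≤ αhi^l` and `λ ≥ 0`. So projecting out `(α, ν)` leaves exactly the big-M constraints.
-/

open Finset Function

section SplitRow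

variable {ι : Type*} [Fintype ι] [DecidableEq ι] {w : ι → ℝ} {j : ι}

theorem sum_erase_eq_one_sub (hw : ∑ d, w d = 1) : ∑ d ∈ univ.erase j, w d = 1 - w j := by
  rw [sum_erase_eq_sub (mem_univ j), hw]

theorem sum_le_bigM_of_le_mul_weight {ν : ι → ℝ} {b hi : ℝ} (hw : ∑ d, w d = 1)
    (hj : ν j ≤ b * w j) (hν : ∀ d, ν d ≤ hi * w d) :
    ∑ d, ν d ≤ b + (hi - b) * (1 - w j) := by
  have hrest : ∑ d ∈ univ.erase j, ν d ≤ hi * (1 - w j) := by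
    rw [← sum_erase_eq_one_sub hw, mul_sum]
    exact sum_le_sum fun d _ => hν d
  rw [← add_sum_erase _ _ (mem_univ j)]
  linear_combination hj + hrest

theorem sum_update_mul_weight (hw : ∑ d, w d = 1) (b hi : ℝ) :
    ∑ d, update (fun d => hi * w d) j (b * w j) d = b + (hi - b) * (1 - w j) := by
  rw [← add_sum_erase _ _ (mem_univ j), update_self,
    sum_congr rfl fun d hd => update_of_ne (ne_of_mem_erase hd) _ _, ← mul_sum,
    sum_erase_eq_one_sub hw]
  ring

theorem exists_split_row_iff_le_bigM (hw0 : ∀ d, 0 ≤ w d) (hw : ∑ d, w d = 1)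
    {lo b hi s : ℝ} (hlo : lo ≤ b) (hhi : b ≤ hi) :
    (∃ ν : ι → ℝ, ν j ≤ b * w j ∧ (∀ d, lo * w d ≤ ν d ∧ ν d ≤ hi * w d) ∧ s ≤ ∑ d, ν d) ↔
      s ≤ b + (hi - b) * (1 - w j) := by
  refine ⟨fun ⟨ν, hj, hν, hs⟩ => hs.trans (sum_le_bigM_of_le_mul_weight hw hj fun d => (hν d).2),
    fun hs => ⟨update (fun d => hi * w d) j (b * w j), by simp, fun d => ?_,
      (sum_update_mul_weight hw b hi).symm ▸ hs⟩⟩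
  rcases eq_or_ne d j with rfl | hd
  · simpa using ⟨mul_le_mul_of_nonneg_right hlo (hw0 d), mul_le_mul_of_nonneg_right hhi (hw0 d)⟩
  · simpa [hd] using mul_le_mul_of_nonneg_right (hlo.trans hhi) (hw0 d)

end SplitRow

theorem one_split_equiv_bigM_general
    {n : ℕ}
    {D : Type} [Fintype D]
    (b : D → ℝ) (h : Fin n → D → ℝ → ℝ)
    (X : Set (Fin n → ℝ))
    (αlo αhi : D → ℝ)
    (hb : ∀ l, αlo l ≤ b l ∧ b l ≤ αhi l)
    (x : Fin n → ℝ) (lam : D → ℝ)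
    (hlam : ∀ l, 0 ≤ lam l ∧ lam l ≤ 1) (hlam1 : ∑ l, lam l = 1) :
    (∃ (α : D → ℝ) (ν : D → D → ℝ),
        x ∈ X ∧
        (∀ l, α l = ∑ d, ν l d) ∧
        (∀ l, ν l l ≤ b l * lam l) ∧
        (∀ l d, αlo l * lam d ≤ ν l d ∧ ν l d ≤ αhi l * lam d) ∧
        (∀ l, ∑ i, h i l (x i) ≤ α l))
      ↔ (x ∈ X ∧ ∀ l, ∑ i, h i l (x i) ≤ b l + (αhi l - b l) * (1 - lam l)) := by
  classical
  have row l := exists_split_row_iff_le_bigM (j := l) (s := ∑ i, h i l (x i))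
    (fun d => (hlam d).1) hlam1 (hb l).1 (hb l).2
  constructor
  · rintro ⟨α, ν, hx, hα, hνl, hνbd, hh⟩
    exact ⟨hx, fun l => (row l).1 ⟨ν l, hνl l, hνbd l, hα l ▸ hh l⟩⟩
  · rintro ⟨hx, hbig⟩
    choose ν hνl hνbd hh using fun l => (row l).2 (hbig l)
    exact ⟨fun l => ∑ d, ν l d, ν, hx, fun _ => rfl, hνl, hνbd, hh⟩

/-- **Theorem 1 (the 1-split formulation is equivalent to the big-M formulation).**
For the 1-split (P = 1, I₁ = {1,…,n}), under αlo^l ≤ b_l ≤ αhi^l, the continuous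
relaxation of the 1-split formulation has the same projection onto (x, λ) as the
big-M formulation with coefficients M^l = αhi^l − b_l. -/
theorem one_split_equiv_bigM
    {n : ℕ} (hn : 1 ≤ n)
    {D : Type} [Fintype D] [Nonempty D]
    (b : D → ℝ) (h : Fin n → D → ℝ → ℝ)
    (hconv : ∀ i l, ConvexOn ℝ Set.univ (h i l))
    (X : Set (Fin n → ℝ)) (hXne : X.Nonempty) (hXconv : Convex ℝ X)
    (hXcomp : IsCompact X)
    (αlo αhi : D → ℝ)
    (hlo : ∀ l, IsLeast ((fun x => ∑ i, h i l (x i)) '' X) (αlo l))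
    (hhi : ∀ l, IsGreatest ((fun x => ∑ i, h i l (x i)) '' X) (αhi l))
    (hb : ∀ l, αlo l ≤ b l ∧ b l ≤ αhi l)
    (x : Fin n → ℝ) (lam : D → ℝ)
    (hlam : ∀ l, 0 ≤ lam l ∧ lam l ≤ 1) (hlam1 : ∑ l, lam l = 1) :
    (∃ (α : D → ℝ) (ν : D → D → ℝ),
        x ∈ X ∧
        (∀ l, α l = ∑ d, ν l d) ∧
        (∀ l, ν l l ≤ b l * lam l) ∧
        (∀ l d, αlo l * lam d ≤ ν l d ∧ ν l d ≤ αhi l * lam d) ∧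
        (∀ l, ∑ i, h i l (x i) ≤ α l))
      ↔ (x ∈ X ∧ ∀ l, ∑ i, h i l (x i) ≤ b l + (αhi l - b l) * (1 - lam l)) :=
  one_split_equiv_bigM_general b h X αlo αhi hb x lam hlam hlam1
end

section
/- (Supporting claim in the proof of Theorem 1: elimination of the disaggregated variables) Assume αlo^l ≤ b_l ≤ αhi^l for every l ∈ D, where αlo^l = min_{x∈X} Σ_{i=1}^n h_{i,l}(x_i) and αhi^l = max_{x∈X} Σ_{i=1}^n h_{i,l}(x_i). Then for every x ∈ ℝⁿ, α ∈ ℝ^D and λ ∈ [0,1]^D with Σ_{l∈D} λ_l = 1, the following are equivalent: (i) x ∈ X, Σ_{i=1}^n h_{i,l}(x_i) ≤ α^l for all l ∈ D, and there exists ν = (ν^l_d)_{l,d∈D} with α^l = Σ_{d∈D} ν^l_d, ν^l_l ≤ b_l·λ_l, and αlo^l·λ_d ≤ ν^l_d ≤ αhi^l·λ_d for all l, d ∈ D; (ii) x ∈ X, Σ_{i=1}^n h_{i,l}(x_i) ≤ α^l and α^l ≤ b_l·λ_l + αhi^l·(1 − λ_l) for all l ∈ D. -/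
/-!
Fix `l` and write `lo = αlo^l`, `hi = αhi^l`. Call `ν` feasible when `ν l ≤ b λ_l` and
`lo λ_d ≤ ν d ≤ hi λ_d` for all `d`. The feasible set is convex, so the values of `∑ d, ν d` on it
form an interval. Its largest element is `b λ_l + hi (1 - λ_l)` (take `ν l = b λ_l` and
`ν d = hi λ_d` otherwise) and it contains `lo` (take `ν = lo λ`). Hence a feasible `ν` summing to
`α^l` exists iff `α^l ≤ b λ_l + hi (1 - λ_l)`, because `α^l ≥ ∑ i, h i l (x i) ≥ lo` for `x ∈ X`.
-/

open Finset

variable {ι : Type*}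

def disaggregatedSet (w : ι → ℝ) (lo b hi : ℝ) (l : ι) : Set (ι → ℝ) :=
  {ν | ν l ≤ b * w l} ∩ Set.univ.pi fun d => Set.Icc (lo * w d) (hi * w d)

theorem convex_disaggregatedSet (w : ι → ℝ) (lo b hi : ℝ) (l : ι) :
    Convex ℝ (disaggregatedSet w lo b hi l) :=
  ((convex_Iic _).linear_preimage (LinearMap.proj l)).inter
    (convex_pi fun _ _ => convex_Icc _ _)

variable [Fintype ι] [DecidableEq ι]

theorem sum_compl_eq_one_sub {w : ι → ℝ} (hw1 : ∑ d, w d = 1) (l : ι) :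
    ∑ d ∈ {l}ᶜ, w d = 1 - w l := by
  linarith [Fintype.sum_eq_add_sum_compl l w]

theorem sum_le_of_mem_disaggregatedSet {w : ι → ℝ} (hw1 : ∑ d, w d = 1) {lo b hi : ℝ} {l : ι}
    {ν : ι → ℝ} (hν : ν ∈ disaggregatedSet w lo b hi l) :
    ∑ d, ν d ≤ b * w l + hi * (1 - w l) := by
  obtain ⟨hνl, hνbox⟩ := hν
  have hrest : ∑ d ∈ {l}ᶜ, ν d ≤ ∑ d ∈ {l}ᶜ, hi * w d :=
    sum_le_sum fun d _ => (hνbox d (Set.mem_univ d)).2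
  rw [← mul_sum, sum_compl_eq_one_sub hw1] at hrest
  linarith [Fintype.sum_eq_add_sum_compl l ν, hνl.out]

theorem mem_sum_image_disaggregatedSet {w : ι → ℝ} (hw : ∀ d, 0 ≤ w d) (hw1 : ∑ d, w d = 1)
    {lo b hi a : ℝ} (hlob : lo ≤ b) (hbhi : b ≤ hi) (l : ι) (hloa : lo ≤ a)
    (haU : a ≤ b * w l + hi * (1 - w l)) :
    a ∈ (fun ν : ι → ℝ => ∑ d, ν d) '' disaggregatedSet w lo b hi l := by
  have hsum_linear : IsLinearMap ℝ fun ν : ι → ℝ => ∑ d, ν d :=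
    ⟨fun _ _ => sum_add_distrib, fun c ν => (smul_sum (s := univ) (r := c) (f := ν)).symm⟩
  have hconv := ((convex_disaggregatedSet w lo b hi l).is_linear_image hsum_linear).ordConnected
  have hbox : ∀ d, lo * w d ≤ hi * w d := fun d =>
    mul_le_mul_of_nonneg_right (hlob.trans hbhi) (hw d)
  have hbottom : lo ∈ (fun ν : ι → ℝ => ∑ d, ν d) '' disaggregatedSet w lo b hi l := by
    refine ⟨fun d => lo * w d, ⟨?_, fun d _ => ⟨le_rfl, hbox d⟩⟩, ?_⟩
    · exact mul_le_mul_of_nonneg_right hlob (hw l)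
    · simp only [← mul_sum, hw1, mul_one]
  have htop : b * w l + hi * (1 - w l) ∈
      (fun ν : ι → ℝ => ∑ d, ν d) '' disaggregatedSet w lo b hi l := by
    refine ⟨Function.update (fun d => hi * w d) l (b * w l), ⟨?_, fun d _ => ?_⟩, ?_⟩
    · simp
    · rcases eq_or_ne d l with rfl | hdl
      · simp only [Function.update_self]
        exact ⟨mul_le_mul_of_nonneg_right hlob (hw d), mul_le_mul_of_nonneg_right hbhi (hw d)⟩
      · simp only [Function.update_of_ne hdl]
        exact ⟨hbox d, le_rfl⟩
    · simp only [sum_update_of_mem (mem_univ l), ← mul_sum, ← compl_eq_univ_sdiff,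
        sum_compl_eq_one_sub hw1]
  exact hconv.out hbottom htop ⟨hloa, haU⟩

theorem one_split_eliminate_disaggregated_general
    {n : ℕ}
    {D : Type} [Fintype D]
    (b : D → ℝ) (h : Fin n → D → ℝ → ℝ)
    (X : Set (Fin n → ℝ))
    (αlo αhi : D → ℝ)
    (hlo : ∀ l, IsLeast ((fun x => ∑ i, h i l (x i)) '' X) (αlo l))
    (hb : ∀ l, αlo l ≤ b l ∧ b l ≤ αhi l)
    (x : Fin n → ℝ) (α : D → ℝ) (lam : D → ℝ)
    (hlam : ∀ l, 0 ≤ lam l ∧ lam l ≤ 1) (hlam1 : ∑ l, lam l = 1) :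
    (x ∈ X ∧ (∀ l, ∑ i, h i l (x i) ≤ α l) ∧
      ∃ ν : D → D → ℝ,
        (∀ l, α l = ∑ d, ν l d) ∧
        (∀ l, ν l l ≤ b l * lam l) ∧
        (∀ l d, αlo l * lam d ≤ ν l d ∧ ν l d ≤ αhi l * lam d))
      ↔ (x ∈ X ∧ ∀ l, ∑ i, h i l (x i) ≤ α l ∧
          α l ≤ b l * lam l + αhi l * (1 - lam l)) := by
  classical
  constructor
  · rintro ⟨hx, hα, ν, hνsum, hνl, hνbox⟩
    refine ⟨hx, fun l => ⟨hα l, ?_⟩⟩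
    rw [hνsum l]
    exact sum_le_of_mem_disaggregatedSet hlam1 ⟨hνl l, fun d _ => hνbox l d⟩
  · rintro ⟨hx, hα⟩
    have hloα : ∀ l, αlo l ≤ α l := fun l => ((hlo l).2 ⟨x, hx, rfl⟩).trans (hα l).1
    choose ν hν hνsum using fun l => mem_sum_image_disaggregatedSet (fun d => (hlam d).1) hlam1
      (hb l).1 (hb l).2 l (hloα l) (hα l).2
    exact ⟨hx, fun l => (hα l).1, ν, fun l => (hνsum l).symm, fun l => (hν l).1,
      fun l d => (hν l).2 d (Set.mem_univ d)⟩

/-- **Supporting claim in the proof of Theorem 1 (elimination of the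
disaggregated variables).** For λ in the continuous relaxation, the
disaggregated variables ν of the 1-split formulation can be projected out:
their existence is equivalent to α^l ≤ b_l·λ_l + αhi^l·(1 − λ_l). -/
theorem one_split_eliminate_disaggregated
    {n : ℕ} (hn : 1 ≤ n)
    {D : Type} [Fintype D] [Nonempty D]
    (b : D → ℝ) (h : Fin n → D → ℝ → ℝ)
    (hconv : ∀ i l, ConvexOn ℝ Set.univ (h i l))
    (X : Set (Fin n → ℝ)) (hXne : X.Nonempty) (hXconv : Convex ℝ X)
    (hXcomp : IsCompact X)
    (αlo αhi : D → ℝ)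
    (hlo : ∀ l, IsLeast ((fun x => ∑ i, h i l (x i)) '' X) (αlo l))
    (hhi : ∀ l, IsGreatest ((fun x => ∑ i, h i l (x i)) '' X) (αhi l))
    (hb : ∀ l, αlo l ≤ b l ∧ b l ≤ αhi l)
    (x : Fin n → ℝ) (α : D → ℝ) (lam : D → ℝ)
    (hlam : ∀ l, 0 ≤ lam l ∧ lam l ≤ 1) (hlam1 : ∑ l, lam l = 1) :
    (x ∈ X ∧ (∀ l, ∑ i, h i l (x i) ≤ α l) ∧
      ∃ ν : D → D → ℝ,
        (∀ l, α l = ∑ d, ν l d) ∧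
        (∀ l, ν l l ≤ b l * lam l) ∧
        (∀ l d, αlo l * lam d ≤ ν l d ∧ ν l d ≤ αhi l * lam d))
      ↔ (x ∈ X ∧ ∀ l, ∑ i, h i l (x i) ≤ α l ∧
          α l ≤ b l * lam l + αhi l * (1 - lam l)) :=
  one_split_eliminate_disaggregated_general b h X αlo αhi hlo hb x α lam hlam hlam1
end

section
/- (Theorem 3: non-extended realization of the P-split formulation for a two-term disjunction) Let D = {1,2}. Then for every x ∈ ℝⁿ and every λ₁, λ₂ ≥ 0 with λ₁ + λ₂ = 1, the following are equivalent: (i) there exist α = (α^l_s) and ν = (ν^l_{s,d}) such that (x, α, ν, λ) satisfies all remaining constraints of the continuous relaxation of the P-split formulation; (ii) x ∈ X and, for every subset S_p ⊆ {1,…,P}, both Σ_{s∈S_p} Σ_{i∈I_s} h_{i,1}(x_i) ≤ (b₁ − Σ_{s∈{1,…,P}∖S_p} αlo^1_s)·λ₁ + (Σ_{s∈S_p} αhi^1_s)·λ₂ and Σ_{s∈S_p} Σ_{i∈I_s} h_{i,2}(x_i) ≤ (b₂ − Σ_{s∈{1,…,P}∖S_p} αlo^2_s)·λ₂ + (Σ_{s∈S_p}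 αhi^2_s)·λ₁ hold. In particular, system (ii) together with λ ∈ {0,1}², λ₁ + λ₂ = 1, is a non-extended realization of the P-split formulation. -/
/-!
For fixed `l` the constraints only involve `ν^l`, and the part `ν^l_{s,d}` with `d ≠ l` is
merely boxed, so each row is a projection problem for the values `g_s = ∑_{i ∈ I_s} h_{i,l}(x_i)`.
Its subset inequalities are necessary by summing the lower box bounds over `Sᶜ` and the upper
ones over `S`. Conversely the greedy split `ν_s = max (αlo_s λ_l) (g_s - αhi_s λ_{l'})`,
with the rest `g_s - ν_s` on the other term, respects every box, and its sum equals the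
right-hand side of the inequality for the set `S` of indices where the maximum is the second
argument.
-/

open Finset

theorem exists_sum_max_eq_sum_compl_add_sum {ι M : Type*} [Fintype ι] [DecidableEq ι]
    [LinearOrder M] [AddCommMonoid M] (a c : ι → M) :
    ∃ S : Finset ι, ∑ s, max (a s) (c s) = ∑ s ∈ Sᶜ, a s + ∑ s ∈ S, c s := by
  refine ⟨univ.filter fun s => a s ≤ c s, ?_⟩
  rw [← sum_compl_add_sum (univ.filter fun s => a s ≤ c s)]
  congr 1 <;> refine sum_congr rfl fun s hs => ?_
  · simp only [compl_filter, mem_filter, mem_univ, true_and, not_le] at hs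
    exact max_eq_left hs.le
  · simp only [mem_filter, mem_univ, true_and] at hs
    exact max_eq_right hs

section Split

variable {ι : Type*} [Fintype ι] (lo hi g : ι → ℝ) (b t u : ℝ)

/-- `own` is the part of `g` charged to the constrained term (weight `t`), `other` the rest. -/
def IsSplit (own other : ι → ℝ) : Prop :=
  (∀ s, g s ≤ own s + other s) ∧ ∑ s, own s ≤ b * t ∧
    ∀ s, (lo s * t ≤ own s ∧ own s ≤ hi s * t) ∧ (lo s * u ≤ other s ∧ other s ≤ hi s * u)

variable {lo hi g b t u}

theorem IsSplit.sum_le [DecidableEq ι] {own other : ι → ℝ}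
    (hsplit : IsSplit lo hi g b t u own other) (S : Finset ι) :
    ∑ s ∈ S, g s ≤ (b - ∑ s ∈ Sᶜ, lo s) * t + (∑ s ∈ S, hi s) * u := by
  obtain ⟨hg, hown, hbox⟩ := hsplit
  calc ∑ s ∈ S, g s
      ≤ ∑ s ∈ S, (own s + other s) := sum_le_sum fun s _ => hg s
    _ = ∑ s, own s - ∑ s ∈ Sᶜ, own s + ∑ s ∈ S, other s := by
        rw [sum_add_distrib, ← sum_compl_add_sum S own]; ring
    _ ≤ b * t - ∑ s ∈ Sᶜ, lo s * t + ∑ s ∈ S, hi s * u := by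
        gcongr with s _ s _
        exacts [(hbox s).1.1, (hbox s).2.2]
    _ = (b - ∑ s ∈ Sᶜ, lo s) * t + (∑ s ∈ S, hi s) * u := by
        simp only [sub_mul, sum_mul]

theorem exists_isSplit [DecidableEq ι] (hlo : lo ≤ g) (hhi : g ≤ hi) (ht : 0 ≤ t) (hu : 0 ≤ u)
    (htu : t + u = 1)
    (hS : ∀ S : Finset ι, ∑ s ∈ S, g s ≤ (b - ∑ s ∈ Sᶜ, lo s) * t + (∑ s ∈ S, hi s) * u) :
    ∃ own other : ι → ℝ, IsSplit lo hi g b t u own other := by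
  set own : ι → ℝ := fun s => max (lo s * t) (g s - hi s * u)
  refine ⟨own, g - own, fun s => by simp, ?_, fun s => ?_⟩
  · obtain ⟨S, hsum⟩ := exists_sum_max_eq_sum_compl_add_sum (fun s => lo s * t)
      (fun s => g s - hi s * u)
    have := hS S
    rw [hsum, ← sum_mul, sum_sub_distrib, ← sum_mul]
    linarith
  have hlo_split : lo s * t + lo s * u = lo s := by rw [← mul_add, htu, mul_one]
  have hhi_split : hi s * t + hi s * u = hi s := by rw [← mul_add, htu, mul_one]
  have hlo_hi : lo s ≤ hi s := (hlo s).trans (hhi s)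
  have hlo_hi_t : lo s * t ≤ hi s * t := mul_le_mul_of_nonneg_right hlo_hi ht
  have hlo_hi_u : lo s * u ≤ hi s * u := mul_le_mul_of_nonneg_right hlo_hi hu
  have hown_le : own s ≤ g s - lo s * u := max_le (by linarith [hlo s]) (by linarith)
  have hown_ge : g s - hi s * u ≤ own s := le_max_right _ _
  refine ⟨⟨le_max_left _ _, max_le hlo_hi_t (by linarith [hhi s])⟩, ?_, ?_⟩ <;>
    simp only [Pi.sub_apply] <;> linarith

theorem exists_isSplit_iff [DecidableEq ι] (hlo : lo ≤ g) (hhi : g ≤ hi) (ht : 0 ≤ t) (hu : 0 ≤ u)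
    (htu : t + u = 1) :
    (∃ own other : ι → ℝ, IsSplit lo hi g b t u own other) ↔
      ∀ S : Finset ι, ∑ s ∈ S, g s ≤ (b - ∑ s ∈ Sᶜ, lo s) * t + (∑ s ∈ S, hi s) * u :=
  ⟨fun ⟨_, _, hsplit⟩ => hsplit.sum_le, exists_isSplit hlo hhi ht hu htu⟩

theorem exists_fin_two_iff_exists_isSplit (l : Fin 2) (lam : Fin 2 → ℝ) :
    (∃ ν : ι → Fin 2 → ℝ, (∀ s, g s ≤ ν s 0 + ν s 1) ∧ ∑ s, ν s l ≤ b * lam l ∧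
        ∀ s d, lo s * lam d ≤ ν s d ∧ ν s d ≤ hi s * lam d) ↔
      ∃ own other : ι → ℝ, IsSplit lo hi g b (lam l) (lam (1 - l)) own other := by
  fin_cases l
  · refine ⟨fun ⟨ν, hg, hown, hbox⟩ => ⟨(ν · 0), (ν · 1), hg, hown, fun s => ⟨hbox s 0, hbox s 1⟩⟩,
      fun ⟨own, other, hg, hown, hbox⟩ => ⟨fun s => ![own s, other s], hg, hown,
        fun s => Fin.forall_fin_two.2 (hbox s)⟩⟩
  · refine ⟨fun ⟨ν, hg, hown, hbox⟩ => ⟨(ν · 1), (ν · 0), fun s => (hg s).trans_eq (add_comm _ _),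
      hown, fun s => ⟨hbox s 1, hbox s 0⟩⟩,
      fun ⟨own, other, hg, hown, hbox⟩ => ⟨fun s => ![other s, own s],
        fun s => (hg s).trans_eq (add_comm _ _), hown,
        fun s => Fin.forall_fin_two.2 (hbox s).symm⟩⟩

end Split

theorem two_term_psplit_nonextended_general
    {n : ℕ}
    (b : Fin 2 → ℝ) (h : Fin n → Fin 2 → ℝ → ℝ)
    (X : Set (Fin n → ℝ))
    {P : ℕ} (I : Fin P → Finset (Fin n))
    (αlo αhi : Fin 2 → Fin P → ℝ)
    (hlo : ∀ l s, IsLeast ((fun x => ∑ i ∈ I s, h i l (x i)) '' X) (αlo l s))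
    (hhi : ∀ l s, IsGreatest ((fun x => ∑ i ∈ I s, h i l (x i)) '' X) (αhi l s))
    (x : Fin n → ℝ) (lam : Fin 2 → ℝ)
    (hlam : ∀ l, 0 ≤ lam l) (hlam1 : lam 0 + lam 1 = 1) :
    (∃ (α : Fin 2 → Fin P → ℝ) (ν : Fin 2 → Fin P → Fin 2 → ℝ),
        x ∈ X ∧
        (∀ l s, α l s = ν l s 0 + ν l s 1) ∧
        (∀ l, ∑ s, ν l s l ≤ b l * lam l) ∧
        (∀ l s d, αlo l s * lam d ≤ ν l s d ∧ ν l s d ≤ αhi l s * lam d) ∧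
        (∀ l s, ∑ i ∈ I s, h i l (x i) ≤ α l s))
      ↔ (x ∈ X ∧ ∀ (Sp : Finset (Fin P)) (l : Fin 2),
          ∑ s ∈ Sp, ∑ i ∈ I s, h i l (x i) ≤
            (b l - ∑ s ∈ Spᶜ, αlo l s) * lam l
              + (∑ s ∈ Sp, αhi l s) * lam (1 - l)) := by
  have elim_α : (∃ (α : Fin 2 → Fin P → ℝ) (ν : Fin 2 → Fin P → Fin 2 → ℝ),
      x ∈ X ∧ (∀ l s, α l s = ν l s 0 + ν l s 1) ∧ (∀ l, ∑ s, ν l s l ≤ b l * lam l) ∧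
        (∀ l s d, αlo l s * lam d ≤ ν l s d ∧ ν l s d ≤ αhi l s * lam d) ∧
        (∀ l s, ∑ i ∈ I s, h i l (x i) ≤ α l s)) ↔
      x ∈ X ∧ ∀ l, ∃ ν : Fin P → Fin 2 → ℝ,
        (∀ s, ∑ i ∈ I s, h i l (x i) ≤ ν s 0 + ν s 1) ∧ ∑ s, ν s l ≤ b l * lam l ∧
          ∀ s d, αlo l s * lam d ≤ ν s d ∧ ν s d ≤ αhi l s * lam d := by
    refine ⟨fun ⟨α, ν, hx, hα, hown, hbox, hg⟩ =>
      ⟨hx, fun l => ⟨ν l, fun s => hα l s ▸ hg l s, hown l, hbox l⟩⟩, fun ⟨hx, hrow⟩ => ?_⟩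
    choose ν hg hown hbox using hrow
    exact ⟨fun l s => ν l s 0 + ν l s 1, ν, hx, fun _ _ => rfl, hown, hbox, hg⟩
  rw [elim_α, forall_comm]
  refine and_congr_right fun hx => forall_congr' fun l => ?_
  have hlam_compl : lam l + lam (1 - l) = 1 := by fin_cases l <;> simp [hlam1, add_comm]
  rw [exists_fin_two_iff_exists_isSplit]
  exact exists_isSplit_iff (fun s => (hlo l s).2 ⟨x, hx, rfl⟩) (fun s => (hhi l s).2 ⟨x, hx, rfl⟩)
    (hlam l) (hlam _) hlam_compl

/-- **Theorem 3 (non-extended realization of the P-split formulation for a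
two-term disjunction).** For D = {1,2} and λ ≥ 0 with λ₁ + λ₂ = 1, the
existence of auxiliary variables (α, ν) satisfying the remaining constraints
of the continuous relaxation of the P-split formulation is equivalent to the
non-extended system of 2·2^P inequalities indexed by subsets S_p ⊆ {1,…,P}. -/
theorem two_term_psplit_nonextended
    {n : ℕ} (hn : 1 ≤ n)
    (b : Fin 2 → ℝ) (h : Fin n → Fin 2 → ℝ → ℝ)
    (hconv : ∀ i l, ConvexOn ℝ Set.univ (h i l))
    (X : Set (Fin n → ℝ)) (hXne : X.Nonempty) (hXconv : Convex ℝ X)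
    (hXcomp : IsCompact X)
    (hdisjne : ∀ l : Fin 2, ∃ x ∈ X, ∑ i, h i l (x i) ≤ b l)
    {P : ℕ} (I : Fin P → Finset (Fin n))
    (hIne : ∀ s, (I s).Nonempty)
    (hpart : ∀ i : Fin n, ∃! s, i ∈ I s)
    (αlo αhi : Fin 2 → Fin P → ℝ)
    (hlo : ∀ l s, IsLeast ((fun x => ∑ i ∈ I s, h i l (x i)) '' X) (αlo l s))
    (hhi : ∀ l s, IsGreatest ((fun x => ∑ i ∈ I s, h i l (x i)) '' X) (αhi l s))
    (x : Fin n → ℝ) (lam : Fin 2 → ℝ)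
    (hlam : ∀ l, 0 ≤ lam l) (hlam1 : lam 0 + lam 1 = 1) :
    (∃ (α : Fin 2 → Fin P → ℝ) (ν : Fin 2 → Fin P → Fin 2 → ℝ),
        x ∈ X ∧
        (∀ l s, α l s = ν l s 0 + ν l s 1) ∧
        (∀ l, ∑ s, ν l s l ≤ b l * lam l) ∧
        (∀ l s d, αlo l s * lam d ≤ ν l s d ∧ ν l s d ≤ αhi l s * lam d) ∧
        (∀ l s, ∑ i ∈ I s, h i l (x i) ≤ α l s))
      ↔ (x ∈ X ∧ ∀ (Sp : Finset (Fin P)) (l : Fin 2),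
          ∑ s ∈ Sp, ∑ i ∈ I s, h i l (x i) ≤
            (b l - ∑ s ∈ Spᶜ, αlo l s) * lam l
              + (∑ s ∈ Sp, αhi l s) * lam (1 - l)) :=
  two_term_psplit_nonextended_general b h X I αlo αhi hlo hhi x lam hlam hlam1
end

section
/- (Corollary 1: refining a split tightens the relaxation under independent bounds) Let D = {1,2}. For a partition I = (I_1,…,I_P) of {1,…,n} into nonempty sets, let R(I) ⊆ ℝⁿ × ℝ² denote the non-extended P-split relaxation: the set of (x, λ₁, λ₂) with x ∈ X, λ₁, λ₂ ≥ 0, λ₁ + λ₂ = 1, such that for every subset S_p ⊆ {1,…,P} and each l ∈ {1,2} (with l' the other index), Σ_{s∈S_p} Σ_{i∈I_s} h_{i,l}(x_i) ≤ (b_l − Σ_{s∉S_p} αlo^l_s(I))·λ_l + (Σ_{s∈S_p} αhi^l_s(I))·λ_{l'}. Let the partition J be obtained from I by splitting one block I_t into two nonempty blocks I_t' and I_t'' (so J has P+1 blocks). Assume the bounds on the split block are independent: for each l ∈ {1,2}, min_{x∈X} Σ_{i∈I_t} h_{i,l}(x_i) = min_{x∈X} Σ_{i∈I_t'} h_{i,l}(x_i)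 + min_{x∈X} Σ_{i∈I_t''} h_{i,l}(x_i), and the analogous equality holds for the maxima. Then R(J) ⊆ R(I), i.e., the (P+1)-split relaxation is always as tight or tighter than the corresponding P-split relaxation. -/
/-!
Let `σ` send each block of `J` to the block of `I` containing it. A subset `S` of blocks of `I`
pulls back to the subset `σ⁻¹(S)` of blocks of `J`, which commutes with complements. Every
quantity appearing in the constraint of `R(I)` indexed by `S` — the partial sum of the
constraint functions, the lower bounds outside `S`, the upper bounds inside `S` — is the sum
of the corresponding quantities of `J` over `σ⁻¹(S)`: for the partial sums because the blocks
of `J` partition those of `I`, for the bounds by their independence on the split block. So each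
constraint of `R(I)` is literally a constraint of `R(J)`.
-/

/-- Lower bound αlo for the partial sum over a block `T` of the constraint of
disjunct `l` (the minimum over X, attained since X is compact and the
functions are continuous). -/
noncomputable def blockLo {n : ℕ} (X : Set (Fin n → ℝ))
    (h : Fin n → Fin 2 → ℝ → ℝ) (l : Fin 2) (T : Finset (Fin n)) : ℝ :=
  sInf ((fun x => ∑ i ∈ T, h i l (x i)) '' X)

/-- Upper bound αhi for the partial sum over a block `T` of the constraint of
disjunct `l` (the maximum over X). -/
noncomputable def blockHi {n : ℕ} (X : Set (Fin n → ℝ))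
    (h : Fin n → Fin 2 → ℝ → ℝ) (l : Fin 2) (T : Finset (Fin n)) : ℝ :=
  sSup ((fun x => ∑ i ∈ T, h i l (x i)) '' X)

/-- The non-extended P-split relaxation R(I) of a two-term disjunction,
for a partition given by blocks `I s`, `s : Fin P`. -/
def splitRelax {n : ℕ} (X : Set (Fin n → ℝ)) (h : Fin n → Fin 2 → ℝ → ℝ)
    (b : Fin 2 → ℝ) {P : ℕ} (I : Fin P → Finset (Fin n)) :
    Set ((Fin n → ℝ) × (Fin 2 → ℝ)) :=
  {p | p.1 ∈ X ∧ (∀ l, 0 ≤ p.2 l) ∧ p.2 0 + p.2 1 = 1 ∧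
    ∀ (Sp : Finset (Fin P)) (l : Fin 2),
      ∑ s ∈ Sp, ∑ i ∈ I s, h i l (p.1 i) ≤
        (b l - ∑ s ∈ Spᶜ, blockLo X h l (I s)) * p.2 l
          + (∑ s ∈ Sp, blockHi X h l (I s)) * p.2 (1 - l)}

open Finset

theorem Finset.sum_filter_mem_eq_sum_fiberwise {ι κ M : Type*} [Fintype ι] [DecidableEq κ]
    [AddCommMonoid M] (σ : ι → κ) (S : Finset κ) (g : ι → M) :
    ∑ i with σ i ∈ S, g i = ∑ j ∈ S, ∑ i with σ i = j, g i := by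
  rw [← sum_fiberwise_of_maps_to (s := {i | σ i ∈ S}) (t := S)
    (fun i hi => (mem_filter.1 hi).2)]
  refine sum_congr rfl fun j hj => ?_
  rw [filter_filter]
  congr 1
  ext i
  simp only [mem_filter, mem_univ, true_and, and_iff_right_iff_imp]
  rintro rfl
  exact hj

theorem splitRelax_subset_of_sum_fiberwise {n P Q : ℕ} (X : Set (Fin n → ℝ))
    (h : Fin n → Fin 2 → ℝ → ℝ) (b : Fin 2 → ℝ) (I : Fin P → Finset (Fin n))
    (J : Fin Q → Finset (Fin n)) (σ : Fin Q → Fin P)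
    (hsum : ∀ s' l (x : Fin n → ℝ),
      ∑ s with σ s = s', ∑ i ∈ J s, h i l (x i) = ∑ i ∈ I s', h i l (x i))
    (hLo : ∀ s' l, ∑ s with σ s = s', blockLo X h l (J s) = blockLo X h l (I s'))
    (hHi : ∀ s' l, ∑ s with σ s = s', blockHi X h l (J s) = blockHi X h l (I s')) :
    splitRelax X h b J ⊆ splitRelax X h b I := by
  rintro ⟨x, w⟩ ⟨hx, hw, hw1, hcon⟩
  refine ⟨hx, hw, hw1, fun S l => ?_⟩
  have hcompl : (univ.filter (σ · ∈ S))ᶜ = univ.filter (σ · ∈ Sᶜ) := by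
    simp only [compl_filter, mem_compl]
  have key := hcon {s | σ s ∈ S} l
  rw [hcompl] at key
  simp only [sum_filter_mem_eq_sum_fiberwise, hsum, hLo, hHi] at key
  exact key

theorem Fin.sum_fiber_lastCases_eq {M : Type*} [AddCommMonoid M] {P : ℕ} (t : Fin P)
    (F : Fin (P + 1) → M) (G : Fin P → M) (hsame : ∀ s, s ≠ t → F s.castSucc = G s)
    (hsplit : G t = F t.castSucc + F (Fin.last P)) (s' : Fin P) :
    ∑ s with Fin.lastCases (motive := fun _ => Fin P) t id s = s', F s = G s' := by
  rw [sum_filter, Fin.sum_univ_castSucc]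
  simp only [Fin.lastCases_castSucc, Fin.lastCases_last, id, sum_ite_eq', mem_univ, if_true]
  by_cases hs : s' = t
  · subst hs
    simp [hsplit]
  · simp [hsame s' hs, Ne.symm hs]

theorem refined_split_tighter_general
    {n : ℕ}
    (b : Fin 2 → ℝ) (h : Fin n → Fin 2 → ℝ → ℝ)
    (X : Set (Fin n → ℝ))
    {P : ℕ} (I : Fin P → Finset (Fin n))
    (J : Fin (P + 1) → Finset (Fin n))
    (t : Fin P)
    (hsame : ∀ s : Fin P, s ≠ t → J s.castSucc = I s)
    (hdisj : Disjoint (J t.castSucc) (J (Fin.last P)))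
    (hsplit : I t = J t.castSucc ∪ J (Fin.last P))
    (hindLo : ∀ l : Fin 2,
      blockLo X h l (I t) = blockLo X h l (J t.castSucc) + blockLo X h l (J (Fin.last P)))
    (hindHi : ∀ l : Fin 2,
      blockHi X h l (I t) = blockHi X h l (J t.castSucc) + blockHi X h l (J (Fin.last P))) :
    splitRelax X h b J ⊆ splitRelax X h b I := by
  have fiber (φ : Finset (Fin n) → ℝ)
      (hφ : φ (I t) = φ (J t.castSucc) + φ (J (Fin.last P))) :=
    Fin.sum_fiber_lastCases_eq t (φ ∘ J) (φ ∘ I) (fun s hs => congrArg φ (hsame s hs)) hφ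
  refine splitRelax_subset_of_sum_fiberwise X h b I J (Fin.lastCases t id)
    (fun s' l x => fiber (fun T => ∑ i ∈ T, h i l (x i)) ?_ s')
    (fun s' l => fiber (blockLo X h l) (hindLo l) s')
    (fun s' l => fiber (blockHi X h l) (hindHi l) s')
  rw [hsplit, sum_union hdisj]

/-- **Corollary 1 (refining a split tightens the relaxation under independent
bounds).** If the partition J is obtained from I by splitting the block I_t
into two nonempty blocks whose bounds are independent, then the (P+1)-split
relaxation R(J) is contained in the P-split relaxation R(I). -/
theorem refined_split_tighter
    {n : ℕ} (hn : 1 ≤ n)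
    (b : Fin 2 → ℝ) (h : Fin n → Fin 2 → ℝ → ℝ)
    (hconv : ∀ i l, ConvexOn ℝ Set.univ (h i l))
    (X : Set (Fin n → ℝ)) (hXne : X.Nonempty) (hXconv : Convex ℝ X)
    (hXcomp : IsCompact X)
    (hdisjne : ∀ l : Fin 2, ∃ x ∈ X, ∑ i, h i l (x i) ≤ b l)
    {P : ℕ} (I : Fin P → Finset (Fin n))
    (hIne : ∀ s, (I s).Nonempty)
    (hpart : ∀ i : Fin n, ∃! s, i ∈ I s)
    (J : Fin (P + 1) → Finset (Fin n))
    (hJne : ∀ s, (J s).Nonempty)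
    (hJpart : ∀ i : Fin n, ∃! s, i ∈ J s)
    (t : Fin P)
    (hsame : ∀ s : Fin P, s ≠ t → J s.castSucc = I s)
    (hdisj : Disjoint (J t.castSucc) (J (Fin.last P)))
    (hsplit : I t = J t.castSucc ∪ J (Fin.last P))
    (hindLo : ∀ l : Fin 2,
      blockLo X h l (I t) = blockLo X h l (J t.castSucc) + blockLo X h l (J (Fin.last P)))
    (hindHi : ∀ l : Fin 2,
      blockHi X h l (I t) = blockHi X h l (J t.castSucc) + blockHi X h l (J (Fin.last P))) :
    splitRelax X h b J ⊆ splitRelax X h b I :=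
  refined_split_tighter_general b h X I J t hsame hdisj hsplit hindLo hindHi
end

section
/- (Valid tight bounds for the auxiliary variables in the illustrative example) Let x ∈ ℝ⁴ satisfy the disjunction (Σ_{i=1}^4 x_i² ≤ 1) ∨ (Σ_{i=1}^4 (3 − x_i)² ≤ 1). Then for every nonempty subset I ⊆ {1,2,3,4}: Σ_{i∈I} x_i² ≤ (√(9·|I|) + 1)² and Σ_{i∈I} (3 − x_i)² ≤ (√(9·|I|) + 1)². Moreover these bounds are tight: for every nonempty I ⊆ {1,2,3,4} there exists x ∈ ℝ⁴ satisfying the disjunction with Σ_{i∈I} x_i² = (√(9·|I|) + 1)², and likewise there exists x satisfying the disjunction with Σ_{i∈I} (3 − x_i)² = (√(9·|I|) + 1)². -/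
/-!
Both index sums are squared Euclidean distances in the coordinates `I`: from `x` to the center
`0` or to the center `3 = (3, …, 3)`. The two centers are `√(9 |I|)` apart in these coordinates
and `x` lies within distance `1` of one of them, so the triangle inequality bounds either distance
by `√(9 |I|) + 1`. Equality holds at the point of the unit ball around one center that lies on the
line through both centers, on the far side from the other center.
-/

open Finset

variable {ι : Type*}

theorem Finset.sum_add_sq_le_sqrt_add_sqrt_sq (s : Finset ι) (f g : ι → ℝ) :
    ∑ i ∈ s, (f i + g i) ^ 2 ≤ (√(∑ i ∈ s, f i ^ 2) + √(∑ i ∈ s, g i ^ 2)) ^ 2 := by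
  have hf : 0 ≤ ∑ i ∈ s, f i ^ 2 := sum_nonneg fun _ _ ↦ sq_nonneg _
  have hg : 0 ≤ ∑ i ∈ s, g i ^ 2 := sum_nonneg fun _ _ ↦ sq_nonneg _
  calc ∑ i ∈ s, (f i + g i) ^ 2
      = ∑ i ∈ s, f i ^ 2 + 2 * ∑ i ∈ s, f i * g i + ∑ i ∈ s, g i ^ 2 := by
        simp only [add_sq, sum_add_distrib, mul_sum, mul_assoc]
    _ ≤ ∑ i ∈ s, f i ^ 2 + 2 * (√(∑ i ∈ s, f i ^ 2) * √(∑ i ∈ s, g i ^ 2))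
          + ∑ i ∈ s, g i ^ 2 := by
        gcongr; exact Real.sum_mul_le_sqrt_mul_sqrt s f g
    _ = (√(∑ i ∈ s, f i ^ 2) + √(∑ i ∈ s, g i ^ 2)) ^ 2 := by
        rw [add_sq, Real.sq_sqrt hf, Real.sq_sqrt hg]; ring

variable [Fintype ι]

theorem sum_sq_sub_le_sqrt_add_sq (I : Finset ι) (x a c : ι → ℝ) {r : ℝ} (hr : 0 ≤ r)
    (hx : ∑ i, (a i - x i) ^ 2 ≤ r ^ 2) :
    ∑ i ∈ I, (c i - x i) ^ 2 ≤ (√(∑ i ∈ I, (c i - a i) ^ 2) + r) ^ 2 := by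
  have hxI : √(∑ i ∈ I, (a i - x i) ^ 2) ≤ r := by
    rw [← Real.sqrt_sq hr]
    exact Real.sqrt_le_sqrt <| (sum_le_sum_of_subset_of_nonneg (subset_univ I)
      fun _ _ _ ↦ sq_nonneg _).trans hx
  calc ∑ i ∈ I, (c i - x i) ^ 2 = ∑ i ∈ I, ((c i - a i) + (a i - x i)) ^ 2 := by
        simp only [sub_add_sub_cancel]
    _ ≤ (√(∑ i ∈ I, (c i - a i) ^ 2) + √(∑ i ∈ I, (a i - x i) ^ 2)) ^ 2 :=
        I.sum_add_sq_le_sqrt_add_sqrt_sq _ _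
    _ ≤ (√(∑ i ∈ I, (c i - a i) ^ 2) + r) ^ 2 := by gcongr

theorem sum_sq_sub_le_sqrt_add_sq_of_or (I : Finset ι) (x a b : ι → ℝ) {r : ℝ} (hr : 0 ≤ r)
    (hx : ∑ i, (a i - x i) ^ 2 ≤ r ^ 2 ∨ ∑ i, (b i - x i) ^ 2 ≤ r ^ 2) :
    ∑ i ∈ I, (a i - x i) ^ 2 ≤ (√(∑ i ∈ I, (a i - b i) ^ 2) + r) ^ 2 := by
  rcases hx with ha | hb
  · calc ∑ i ∈ I, (a i - x i) ^ 2 ≤ (√(∑ i ∈ I, (a i - a i) ^ 2) + r) ^ 2 :=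
          sum_sq_sub_le_sqrt_add_sq I x a a hr ha
      _ ≤ (√(∑ i ∈ I, (a i - b i) ^ 2) + r) ^ 2 := by
          gcongr (√?_ + _) ^ 2
          exact sum_le_sum fun i _ ↦ by simpa using sq_nonneg (a i - b i)
  · exact sum_sq_sub_le_sqrt_add_sq I x b a hr hb

theorem exists_sum_sq_sub_eq_sqrt_add_sq (I : Finset ι) (a c : ι → ℝ) (r : ℝ)
    (hac : 0 < ∑ i ∈ I, (c i - a i) ^ 2) :
    ∃ y : ι → ℝ, ∑ i, (a i - y i) ^ 2 = r ^ 2 ∧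
      ∑ i ∈ I, (c i - y i) ^ 2 = (√(∑ i ∈ I, (c i - a i) ^ 2) + r) ^ 2 := by
  classical
  set d := √(∑ i ∈ I, (c i - a i) ^ 2)
  have hd : 0 < d := Real.sqrt_pos.mpr hac
  have hd2 : d ^ 2 = ∑ i ∈ I, (c i - a i) ^ 2 := Real.sq_sqrt hac.le
  refine ⟨fun i ↦ a i - r / d * if i ∈ I then c i - a i else 0, ?_, ?_⟩
  · calc ∑ i, (a i - (a i - r / d * if i ∈ I then c i - a i else 0)) ^ 2
        = (r / d) ^ 2 * ∑ i ∈ I, (c i - a i) ^ 2 := by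
          simp only [sub_sub_cancel, mul_pow, ← mul_sum, ite_pow, ne_eq, OfNat.ofNat_ne_zero,
            not_false_eq_true, zero_pow, sum_ite_mem, univ_inter]
      _ = r ^ 2 := by rw [← hd2]; field_simp
  · calc ∑ i ∈ I, (c i - (a i - r / d * if i ∈ I then c i - a i else 0)) ^ 2
        = (1 + r / d) ^ 2 * ∑ i ∈ I, (c i - a i) ^ 2 := by
          rw [mul_sum]; refine sum_congr rfl fun i hi ↦ ?_; rw [if_pos hi]; ring
      _ = (d + r) ^ 2 := by rw [← hd2]; field_simp

/-- **Valid tight bounds for the auxiliary variables in the illustrative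
example.** Any x ∈ ℝ⁴ satisfying the disjunction
(Σ x_i² ≤ 1) ∨ (Σ (3 − x_i)² ≤ 1) obeys, for every nonempty I ⊆ {1,…,4},
Σ_{i∈I} x_i² ≤ (√(9|I|)+1)² and Σ_{i∈I} (3 − x_i)² ≤ (√(9|I|)+1)²,
and these bounds are attained by points satisfying the disjunction. -/
theorem illustrative_example_bounds
    (x : Fin 4 → ℝ)
    (hx : (∑ i, (x i) ^ 2 ≤ 1) ∨ (∑ i, (3 - x i) ^ 2 ≤ 1)) :
    (∀ I : Finset (Fin 4), I.Nonempty →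
        ∑ i ∈ I, (x i) ^ 2 ≤ (Real.sqrt (9 * I.card) + 1) ^ 2) ∧
    (∀ I : Finset (Fin 4), I.Nonempty →
        ∑ i ∈ I, (3 - x i) ^ 2 ≤ (Real.sqrt (9 * I.card) + 1) ^ 2) ∧
    (∀ I : Finset (Fin 4), I.Nonempty →
        ∃ y : Fin 4 → ℝ,
          ((∑ i, (y i) ^ 2 ≤ 1) ∨ (∑ i, (3 - y i) ^ 2 ≤ 1)) ∧
          ∑ i ∈ I, (y i) ^ 2 = (Real.sqrt (9 * I.card) + 1) ^ 2) ∧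
    (∀ I : Finset (Fin 4), I.Nonempty →
        ∃ y : Fin 4 → ℝ,
          ((∑ i, (y i) ^ 2 ≤ 1) ∨ (∑ i, (3 - y i) ^ 2 ≤ 1)) ∧
          ∑ i ∈ I, (3 - y i) ^ 2 = (Real.sqrt (9 * I.card) + 1) ^ 2) := by
  have hdist (I : Finset (Fin 4)) : ∑ _i ∈ I, (3 : ℝ) ^ 2 = 9 * #I := by
    rw [sum_const, nsmul_eq_mul, mul_comm]; norm_num
  have hx' : ∑ i, (0 - x i) ^ 2 ≤ 1 ^ 2 ∨ ∑ i, (3 - x i) ^ 2 ≤ 1 ^ 2 := by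
    simpa only [zero_sub, neg_sq, one_pow] using hx
  have hpos (I : Finset (Fin 4)) (hI : I.Nonempty) : (0 : ℝ) < 9 * #I := by
    have := hI.card_pos; positivity
  refine ⟨fun I _ ↦ ?_, fun I _ ↦ ?_, fun I hI ↦ ?_, fun I hI ↦ ?_⟩
  · simpa only [zero_sub, neg_sq, hdist] using
      sum_sq_sub_le_sqrt_add_sq_of_or I x (fun _ ↦ 0) (fun _ ↦ 3) zero_le_one hx'
  · simpa only [sub_zero, hdist] using
      sum_sq_sub_le_sqrt_add_sq_of_or I x (fun _ ↦ 3) (fun _ ↦ 0) zero_le_one hx'.symm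
  · obtain ⟨y, hball, hy⟩ := exists_sum_sq_sub_eq_sqrt_add_sq I (fun _ ↦ 3) (fun _ ↦ 0) 1
      (by simpa only [zero_sub, neg_sq, hdist] using hpos I hI)
    refine ⟨y, Or.inr (by simpa only [one_pow] using hball.le), ?_⟩
    simpa only [zero_sub, neg_sq, hdist] using hy
  · obtain ⟨y, hball, hy⟩ := exists_sum_sq_sub_eq_sqrt_add_sq I (fun _ ↦ 0) (fun _ ↦ 3) 1
      (by simpa only [sub_zero, hdist] using hpos I hI)
    refine ⟨y, Or.inl (by simpa only [zero_sub, neg_sq, one_pow] using hball.le), ?_⟩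
    simpa only [sub_zero, hdist] using hy
end
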